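/- arXiv:1704.07279 — 3 statements merged into one kernel-verified Lean document; each statement's English description precedes it below -/
import Mathlib

section
/- Let G be a clique-grid graph with representation f: V(G) → [t] × [t'], i.e., each set f⁻¹(i,j) induces a clique, and every edge of G joins vertices whose cells differ by at most 2 in each coordinate. Let H be a minimal backbone for (G, f). Then for every cell (i,j), |f⁻¹(i,j) ∩ V(H)| ≤ 24, and the maximum degree of H is at most 599. -/
/-- `f` is a clique-grid representation of `G`: each cell induces a clique, and every
edge joins vertices whose cells differ by at most 2 in each coordinate. -/
def IsRepresentation {V : Type*} (G : SimpleGraph V) (f : V → ℤ × ℤ) : Prop :=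
  (∀ u v : V, u ≠ v → f u = f v → G.Adj u v) ∧
  (∀ u v : V, G.Adj u v → |(f u).1 - (f v).1| ≤ 2 ∧ |(f u).2 - (f v).2| ≤ 2)

/-- The induced subgraph of `G` on the vertex set `S` is a backbone for `(G, f)`:
whenever some edge of `G` joins two distinct cells, some edge of the induced subgraph
also joins those two cells. -/
def IsBackbone {V : Type*} (G : SimpleGraph V) (f : V → ℤ × ℤ) (S : Set V) : Prop :=
  ∀ c c' : ℤ × ℤ, c ≠ c' → (∃ u v : V, f u = c ∧ f v = c' ∧ G.Adj u v) →
    ∃ u' ∈ S, ∃ v' ∈ S, f u' = c ∧ f v' = c' ∧ G.Adj u' v'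

/-!
Every vertex `v` of a minimal backbone `S` is indispensable, so some pair of cells is joined
inside `S` only through `v`: there is a cell `c' ≠ f v` within distance 2 of `f v` such that
`v` is the only vertex of `S` in the cell of `v` with an `S`-neighbour in `c'`. Distinct
vertices of `S` in one cell therefore have distinct such cells `c'`, which lie among the 24
cells around it. The `S`-neighbours of `v` lie in the 25 cells around `f v`, each holding at
most 24 vertices of `S`, and `v` itself is not among them: `25 * 24 - 1 = 599`.
-/

noncomputable def gridBox (c : ℤ × ℤ) (r : ℕ) : Finset (ℤ × ℤ) :=
  Finset.Icc (c.1 - r) (c.1 + r) ×ˢ Finset.Icc (c.2 - r) (c.2 + r)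

lemma mem_gridBox {c d : ℤ × ℤ} {r : ℕ} :
    d ∈ gridBox c r ↔ |d.1 - c.1| ≤ r ∧ |d.2 - c.2| ≤ r := by
  simp only [gridBox, Finset.mem_product, Finset.mem_Icc, abs_le]
  omega

lemma card_gridBox (c : ℤ × ℤ) (r : ℕ) : (gridBox c r).card = (2 * r + 1) ^ 2 := by
  simp only [gridBox, Finset.card_product, Int.card_Icc, sq]
  congr 1 <;> omega

lemma self_mem_gridBox (c : ℤ × ℤ) (r : ℕ) : c ∈ gridBox c r :=
  mem_gridBox.2 ⟨by simp, by simp⟩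

section Backbone

variable {V : Type*} {G : SimpleGraph V} {f : V → ℤ × ℤ} {S : Set V} {v : V}

lemma exists_private_cell_of_forall_not_adj {w : V} (hw : w ∈ S) (hvw : G.Adj v w)
    (hcell : f v ≠ f w)
    (hfail : ∀ u ∈ S \ {v}, ∀ u' ∈ S \ {v}, f u = f v → f u' = f w → ¬ G.Adj u u') :
    ∃ c', c' ≠ f v ∧ (∃ w ∈ S, f w = c' ∧ G.Adj v w) ∧
      ∀ u ∈ S, ∀ u' ∈ S, f u = f v → f u' = c' → G.Adj u u' → u = v := by
  refine ⟨f w, hcell.symm, ⟨w, hw, rfl, hvw⟩, fun u hu u' hu' hfu hfu' huu' => ?_⟩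
  by_contra huv
  have hu'v : u' ≠ v := by
    rintro rfl
    exact hcell hfu'
  exact hfail u ⟨hu, huv⟩ u' ⟨hu', hu'v⟩ hfu hfu' huu'

lemma IsBackbone.exists_private_cell (hS : IsBackbone G f S) (hv : ¬ IsBackbone G f (S \ {v})) :
    ∃ c', c' ≠ f v ∧ (∃ w ∈ S, f w = c' ∧ G.Adj v w) ∧
      ∀ u ∈ S, ∀ u' ∈ S, f u = f v → f u' = c' → G.Adj u u' → u = v := by
  simp only [IsBackbone, not_forall, not_exists, not_and] at hv
  obtain ⟨c, c', hcc', hedge, hfail⟩ := hv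
  obtain ⟨u, hu, w, hw, rfl, rfl, huw⟩ := hS c c' hcc' hedge
  have hv : u = v ∨ w = v := by
    by_contra! h
    exact hfail u ⟨hu, h.1⟩ w ⟨hw, h.2⟩ rfl rfl huw
  rcases hv with rfl | rfl
  · exact exists_private_cell_of_forall_not_adj hw huw hcc'
      fun a ha a' ha' hfa hfa' => hfail a ha a' ha' hfa hfa'
  · exact exists_private_cell_of_forall_not_adj hu huw.symm hcc'.symm
      fun a ha a' ha' hfa hfa' haa' => hfail a' ha' a ha hfa' hfa haa'.symm

variable (hloc : ∀ u v : V, G.Adj u v → |(f u).1 - (f v).1| ≤ 2 ∧ |(f u).2 - (f v).2| ≤ 2)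
include hloc

lemma encard_cell_le_of_minimal (hS : IsBackbone G f S)
    (hmin : ∀ v ∈ S, ¬ IsBackbone G f (S \ {v})) (c : ℤ × ℤ) :
    {v ∈ S | f v = c}.encard ≤ 24 := by
  have hpriv v (hv : v ∈ S) := hS.exists_private_cell (hmin v hv)
  choose! g hgv hgadj hguniq using hpriv
  have hmaps : Set.MapsTo g {v ∈ S | f v = c} ((gridBox c 2).erase c : Set (ℤ × ℤ)) := by
    rintro v ⟨hv, rfl⟩
    obtain ⟨w, -, hfw, hvw⟩ := hgadj v hv
    refine Finset.mem_coe.2 (Finset.mem_erase.2 ⟨hgv v hv, ?_⟩)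
    rw [mem_gridBox, ← hfw, abs_sub_comm _ (f v).1, abs_sub_comm _ (f v).2]
    exact_mod_cast hloc v w hvw
  have hinj : Set.InjOn g {v ∈ S | f v = c} := by
    rintro x ⟨hx, hfx⟩ y ⟨hy, hfy⟩ hgxy
    obtain ⟨w, hw, hfw, hyw⟩ := hgadj y hy
    exact (hguniq x hx y hy w hw (hfy.trans hfx.symm) (hfw.trans hgxy.symm) hyw).symm
  calc {v ∈ S | f v = c}.encard
      ≤ ((gridBox c 2).erase c : Set (ℤ × ℤ)).encard := Set.encard_le_encard_of_injOn hmaps hinj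
    _ = 24 := by
      rw [Set.encard_coe_eq_coe_finsetCard, Finset.card_erase_of_mem (self_mem_gridBox c 2),
        card_gridBox]
      rfl

lemma encard_adj_le_of_minimal (hS : IsBackbone G f S)
    (hmin : ∀ v ∈ S, ¬ IsBackbone G f (S \ {v})) (hv : v ∈ S) :
    {u ∈ S | G.Adj v u}.encard ≤ 599 := by
  set U := ⋃ d ∈ gridBox (f v) 2, {u ∈ S | f u = d}
  have hsub : {u ∈ S | G.Adj v u} ⊆ U \ {v} := by
    rintro u ⟨hu, hvu⟩
    refine ⟨Set.mem_biUnion (x := f u) ?_ ⟨hu, rfl⟩, hvu.ne'⟩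
    rw [Finset.mem_coe, mem_gridBox, abs_sub_comm _ (f v).1, abs_sub_comm _ (f v).2]
    exact_mod_cast hloc v u hvu
  have hU : U.encard ≤ 600 :=
    calc U.encard ≤ ∑ d ∈ gridBox (f v) 2, {u ∈ S | f u = d}.encard :=
          Finset.set_encard_biUnion_le _ _
      _ ≤ ∑ _d ∈ gridBox (f v) 2, 24 :=
          Finset.sum_le_sum fun d _ => encard_cell_le_of_minimal hloc hS hmin d
      _ = 600 := by rw [Finset.sum_const, card_gridBox]; rfl
  have hvU : v ∈ U := Set.mem_biUnion (self_mem_gridBox (f v) 2) ⟨hv, rfl⟩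
  calc {u ∈ S | G.Adj v u}.encard ≤ (U \ {v}).encard := Set.encard_le_encard hsub
    _ = U.encard - 1 := Set.encard_sdiff_singleton_of_mem hvU
    _ ≤ 600 - 1 := tsub_le_tsub_right hU 1
    _ = 599 := rfl

end Backbone

theorem minimal_backbone_bounded_degree_general {V : Type*} (G : SimpleGraph V)
    (f : V → ℤ × ℤ) (hrep : IsRepresentation G f) (S : Set V)
    (hS : IsBackbone G f S) (hmin : ∀ S' : Set V, S' ⊂ S → ¬ IsBackbone G f S') :
    (∀ c : ℤ × ℤ, {v ∈ S | f v = c}.ncard ≤ 24) ∧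
    (∀ v ∈ S, {u ∈ S | G.Adj v u}.ncard ≤ 599) := by
  have hmin' : ∀ v ∈ S, ¬ IsBackbone G f (S \ {v}) := fun v hv =>
    hmin _ (Set.sdiff_singleton_ssubset.2 hv)
  exact ⟨fun c => (Set.encard_le_coe_iff_finite_ncard_le.1
      (encard_cell_le_of_minimal hrep.2 hS hmin' c)).2,
    fun v hv => (Set.encard_le_coe_iff_finite_ncard_le.1
      (encard_adj_le_of_minimal hrep.2 hS hmin' hv)).2⟩

/-- A minimal backbone of a clique-grid graph has at most 24 vertices in each cell, and
its maximum degree is at most 599. -/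
theorem minimal_backbone_bounded_degree {V : Type*} [Fintype V] (G : SimpleGraph V)
    (f : V → ℤ × ℤ) (hrep : IsRepresentation G f) (S : Set V)
    (hS : IsBackbone G f S) (hmin : ∀ S' : Set V, S' ⊂ S → ¬ IsBackbone G f S') :
    (∀ c : ℤ × ℤ, {v ∈ S | f v = c}.ncard ≤ 24) ∧
    (∀ v ∈ S, {u ∈ S | G.Adj v u}.ncard ≤ 599) :=
  minimal_backbone_bounded_degree_general G f hrep S hS hmin
end

section
/- Let G be a clique-grid graph with representation f, and suppose G contains a cycle C that is ℓ-stretched for some ℓ ≥ 2k. Then G contains a cycle on more than k vertices. -/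
lemma walk_coord_bound {V : Type*} {G : SimpleGraph V} {f : V → ℤ × ℤ}
    (hrep : IsRepresentation G f) {x y : V} (w : G.Walk x y) :
    |(f x).1 - (f y).1| ≤ 2 * w.length ∧ |(f x).2 - (f y).2| ≤ 2 * w.length := by
  induction w with
  | nil => simp
  | @cons x y z h p ih =>
    obtain ⟨h1, h2⟩ := hrep.2 _ _ h
    have t1 := abs_sub_le (f x).1 (f y).1 (f z).1
    have t2 := abs_sub_le (f x).2 (f y).2 (f z).2
    simp only [SimpleGraph.Walk.length_cons]
    push_cast
    constructor <;> linarith [ih.1, ih.2]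

/-- If a clique-grid graph contains a cycle that is `ℓ`-stretched for some `ℓ ≥ 2k`
(it meets two cells differing by at least `2ℓ` in some coordinate), then it contains a
cycle on more than `k` vertices. -/
theorem stretched_cycle_long {V : Type*} (G : SimpleGraph V) (f : V → ℤ × ℤ)
    (hrep : IsRepresentation G f) (k ℓ : ℕ) (hℓ : 2 * k ≤ ℓ)
    (a : V) (w : G.Walk a a) (hw : w.IsCycle)
    (hstretch : ∃ u ∈ w.support, ∃ u' ∈ w.support,
      2 * (ℓ : ℤ) ≤ |(f u).1 - (f u').1| ∨ 2 * (ℓ : ℤ) ≤ |(f u).2 - (f u').2|) :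
    ∃ (b : V) (w' : G.Walk b b), w'.IsCycle ∧ k < w'.length := by
  classical
  obtain ⟨u, hu, u', hu', hst⟩ := hstretch
  -- distance between u and u' along the cycle bounds things
  have key : (ℓ : ℤ) ≤ (w.length : ℤ) := by
    have hsplit := w.take_spec hu
    have hmem : u' ∈ (w.takeUntil u hu).support ∨ u' ∈ (w.dropUntil u hu).support := by
      have := hu'
      rw [← hsplit, SimpleGraph.Walk.mem_support_append_iff] at this
      exact this
    have hlen : ((w.takeUntil u hu).length : ℤ) + ((w.dropUntil u hu).length : ℤ)
        = (w.length : ℤ) := by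
      have := congrArg SimpleGraph.Walk.length hsplit
      rw [SimpleGraph.Walk.length_append] at this
      push_cast [← this]; ring
    rcases hmem with hm | hm
    · have hb := walk_coord_bound hrep ((w.takeUntil u hu).dropUntil u' hm)
      have hspec := congrArg SimpleGraph.Walk.length ((w.takeUntil u hu).take_spec hm)
      rw [SimpleGraph.Walk.length_append] at hspec
      have hspec' : (((w.takeUntil u hu).takeUntil u' hm).length : ℤ) +
          (((w.takeUntil u hu).dropUntil u' hm).length : ℤ)
          = ((w.takeUntil u hu).length : ℤ) := by exact_mod_cast hspec
      have hd : ((w.dropUntil u hu).length : ℤ) ≥ 0 := by positivity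
      have hd2 : (((w.takeUntil u hu).takeUntil u' hm).length : ℤ) ≥ 0 := by positivity
      rcases hst with h | h
      · have := hb.1
        rw [abs_sub_comm] at this
        linarith
      · have := hb.2
        rw [abs_sub_comm] at this
        linarith
    · have hb := walk_coord_bound hrep ((w.dropUntil u hu).takeUntil u' hm)
      have hspec := congrArg SimpleGraph.Walk.length ((w.dropUntil u hu).take_spec hm)
      rw [SimpleGraph.Walk.length_append] at hspec
      have hspec' : (((w.dropUntil u hu).takeUntil u' hm).length : ℤ) +
          (((w.dropUntil u hu).dropUntil u' hm).length : ℤ)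
          = ((w.dropUntil u hu).length : ℤ) := by exact_mod_cast hspec
      have hd : ((w.takeUntil u hu).length : ℤ) ≥ 0 := by positivity
      have hd2 : (((w.dropUntil u hu).dropUntil u' hm).length : ℤ) ≥ 0 := by positivity
      rcases hst with h | h
      · have := hb.1
        linarith
      · have := hb.2
        linarith
  have h3 := hw.three_le_length
  have : ℓ ≤ w.length := by exact_mod_cast key
  exact ⟨a, w, hw, by omega⟩
end

section
/- Let G be a clique-grid graph with representation f: V(G) → [t] × [t'], and let 𝒞 be a family of pairwise vertex-disjoint induced cycles in G, each on at least 4 vertices, such that for each pair of distinct cells at most two cycles of 𝒞 cross that pair and for each triple of distinct cells at most two cycles of 𝒞 cross that triple. Then for every cell (i,j), the number of vertices of f⁻¹(i,j) that are endpoints of edges of cycles in 𝒞 whose endpoints lie in different cells is at most 2304. -/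
/-- A cycle with edge list `E` crosses the ordered pair of cells `(c1, c2)`: there are
two edges of the cycle from `c1` to `c2` whose `c2`-endpoints are distinct. -/
def OrientedCross {V : Type*} (f : V → ℤ × ℤ) (E : List (Sym2 V)) (c1 c2 : ℤ × ℤ) :
    Prop :=
  ∃ p q r t : V, f p = c1 ∧ f q = c1 ∧ f r = c2 ∧ f t = c2 ∧ r ≠ t ∧
    s(p, r) ∈ E ∧ s(q, t) ∈ E

/-- Crossing the unordered pair of cells `{c1, c2}`. -/
def CrossesPair {V : Type*} (f : V → ℤ × ℤ) (E : List (Sym2 V)) (c1 c2 : ℤ × ℤ) :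
    Prop :=
  OrientedCross f E c1 c2 ∨ OrientedCross f E c2 c1

/-- A cycle with edge list `E` crosses the ordered triple of cells `(c1, c2, c3)`: it has
an edge between `c1` and `c2` and an edge between `c2` and `c3`. -/
def OrientedTriple {V : Type*} (f : V → ℤ × ℤ) (E : List (Sym2 V))
    (c1 c2 c3 : ℤ × ℤ) : Prop :=
  ∃ p q r t : V, f p = c1 ∧ f q = c2 ∧ f r = c2 ∧ f t = c3 ∧
    s(p, q) ∈ E ∧ s(r, t) ∈ E

/-- Crossing the unordered triple of cells `{c1, c2, c3}`. -/
def CrossesTriple {V : Type*} (f : V → ℤ × ℤ) (E : List (Sym2 V))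
    (c1 c2 c3 : ℤ × ℤ) : Prop :=
  OrientedTriple f E c1 c2 c3 ∨ OrientedTriple f E c1 c3 c2 ∨
  OrientedTriple f E c2 c1 c3 ∨ OrientedTriple f E c2 c3 c1 ∨
  OrientedTriple f E c3 c1 c2 ∨ OrientedTriple f E c3 c2 c1

namespace SimpleGraph.Walk

variable {V : Type*} {G : SimpleGraph V}

lemma support_subset_of_edges_closed {S : Set V} {u v : V} (p : G.Walk u v)
    (hS : ∀ x y, s(x, y) ∈ p.edges → x ∈ S → y ∈ S) (hmeet : ∃ x ∈ p.support, x ∈ S) :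
    ∀ x ∈ p.support, x ∈ S := by
  induction p with
  | nil => simpa using hmeet
  | @cons u w _ h p ih =>
    have hS' : ∀ x y, s(x, y) ∈ p.edges → x ∈ S → y ∈ S :=
      fun x y hxy => hS x y (by simp [hxy])
    have huw : s(u, w) ∈ (cons h p).edges := by simp
    by_cases hp : ∃ x ∈ p.support, x ∈ S
    · have hw : w ∈ S := ih hS' hp w p.start_mem_support
      have hu : u ∈ S := hS w u (Sym2.eq_swap ▸ huw) hw
      simpa [hu] using ih hS' hp
    · obtain ⟨x, hx, hxS⟩ := hmeet
      have hu : u ∈ S := by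
        rw [support_cons, List.mem_cons] at hx
        rcases hx with rfl | hx
        exacts [hxS, absurd ⟨x, hx, hxS⟩ hp]
      exact absurd ⟨w, p.start_mem_support, hS u w huw hu⟩ hp

lemma neighborSet_toSubgraph_eq_setOf_mem_edges {u v x : V} (p : G.Walk u v) :
    p.toSubgraph.neighborSet x = {y | s(x, y) ∈ p.edges} :=
  Set.ext fun _ => adj_toSubgraph_iff_mem_edges

lemma IsCycle.exists_mem_edges_ne {v x y : V} {W : G.Walk v v} (hW : W.IsCycle)
    (hxy : s(x, y) ∈ W.edges) : ∃ z, z ≠ y ∧ s(x, z) ∈ W.edges := by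
  have h2 := hW.ncard_neighborSet_toSubgraph_eq_two (W.fst_mem_support_of_mem_edges hxy)
  rw [neighborSet_toSubgraph_eq_setOf_mem_edges] at h2
  obtain ⟨z, hz, hzy⟩ := Set.exists_ne_of_one_lt_ncard
    (s := {z | s(x, z) ∈ W.edges}) (by omega) y
  exact ⟨z, hzy, hz⟩

lemma IsCycle.eq_or_eq_of_mem_edges {v x y z w : V} {W : G.Walk v v} (hW : W.IsCycle)
    (hy : s(x, y) ∈ W.edges) (hz : s(x, z) ∈ W.edges) (hyz : y ≠ z)
    (hw : s(x, w) ∈ W.edges) : w = y ∨ w = z := by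
  have hN := W.neighborSet_toSubgraph_eq_setOf_mem_edges (x := x)
  have hpair : {y, z} = {w | s(x, w) ∈ W.edges} := by
    refine Set.eq_of_subset_of_ncard_le (by simp [Set.insert_subset_iff, hy, hz]) ?_
      (hN ▸ W.finite_neighborSet_toSubgraph)
    rw [← hN, hW.ncard_neighborSet_toSubgraph_eq_two (W.fst_mem_support_of_mem_edges hy),
      Set.ncard_pair hyz]
  have hw' : w ∈ ({y, z} : Set V) := hpair ▸ hw
  simpa using hw'

lemma IsCycle.length_eq_three_of_triangle {v a b c : V} {W : G.Walk v v} (hW : W.IsCycle)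
    (hab : s(a, b) ∈ W.edges) (hbc : s(b, c) ∈ W.edges) (hac : s(a, c) ∈ W.edges)
    (nab : a ≠ b) (nac : a ≠ c) (nbc : b ≠ c) : W.length = 3 := by
  classical
  have hclosed : ∀ x y, s(x, y) ∈ W.edges → x ∈ ({a, b, c} : Finset V) →
      y ∈ ({a, b, c} : Finset V) := by
    intro x y hxy hx
    simp only [Finset.mem_insert, Finset.mem_singleton] at hx ⊢
    rcases hx with rfl | rfl | rfl
    · have := hW.eq_or_eq_of_mem_edges hab hac nbc hxy; tauto
    · have := hW.eq_or_eq_of_mem_edges (Sym2.eq_swap ▸ hab) hbc nac hxy; tauto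
    · have := hW.eq_or_eq_of_mem_edges (Sym2.eq_swap ▸ hac) (Sym2.eq_swap ▸ hbc) nab hxy; tauto
  have hsupp := W.support_subset_of_edges_closed (S := {x | x ∈ ({a, b, c} : Finset V)})
    hclosed ⟨a, W.fst_mem_support_of_mem_edges hab, by simp⟩
  have hle : W.support.tail.length ≤ 3 := by
    rw [← List.toFinset_card_of_nodup hW.support_nodup]
    refine (Finset.card_le_card (t := {a, b, c}) fun x hx => ?_).trans Finset.card_le_three
    exact hsupp x (List.mem_of_mem_tail (List.mem_toFinset.mp hx))
  have := hW.three_le_length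
  rw [List.length_tail, length_support] at hle
  omega

def IsInduced {u v : V} (p : G.Walk u v) : Prop :=
  ∀ x ∈ p.support, ∀ y ∈ p.support, G.Adj x y → s(x, y) ∈ p.edges

lemma IsCycle.eq_or_eq_or_eq_of_isClique {v a b d : V} {s : Set V} {W : G.Walk v v}
    (hW : W.IsCycle) (h4 : 4 ≤ W.length) (hind : W.IsInduced) (hs : G.IsClique s)
    (ha : a ∈ W.support) (hb : b ∈ W.support) (hd : d ∈ W.support)
    (has : a ∈ s) (hbs : b ∈ s) (hds : d ∈ s) : a = b ∨ a = d ∨ b = d := by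
  by_contra! hne
  obtain ⟨nab, nad, nbd⟩ := hne
  have := hW.length_eq_three_of_triangle (hind a ha b hb (hs has hbs nab))
    (hind b hb d hd (hs hbs hds nbd)) (hind a ha d hd (hs has hds nad)) nab nad nbd
  omega

lemma IsCycle.ncard_inter_le_two_of_isClique {v : V} {s : Set V} {W : G.Walk v v}
    (hW : W.IsCycle) (h4 : 4 ≤ W.length) (hind : W.IsInduced) (hs : G.IsClique s) :
    ({x | x ∈ W.support} ∩ s).ncard ≤ 2 := by
  by_contra! h
  obtain ⟨a, ⟨ha, has⟩, b, ⟨hb, hbs⟩, d, ⟨hd, hds⟩, nab, nad, nbd⟩ :=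
    (Set.two_lt_ncard (W.support.finite_toSet.subset Set.inter_subset_left)).mp h
  rcases hW.eq_or_eq_or_eq_of_isClique h4 hind hs ha hb hd has hbs hds with h | h | h
  exacts [nab h, nad h, nbd h]

end SimpleGraph.Walk

lemma Set.ncard_le_card_mul_of_subset_biUnion {ι α : Type*} {A : Set α} {t : Finset ι}
    {s : ι → Set α} {k : ℕ} (hA : A ⊆ ⋃ i ∈ t, s i) (hfin : ∀ i ∈ t, (s i).Finite)
    (hk : ∀ i ∈ t, (s i).ncard ≤ k) : A.ncard ≤ t.card * k :=
  calc A.ncard ≤ (⋃ i ∈ t, s i).ncard := Set.ncard_le_ncard hA (t.finite_toSet.biUnion hfin)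
    _ ≤ ∑ i ∈ t, (s i).ncard := t.set_ncard_biUnion_le s
    _ ≤ t.card * k := Finset.sum_le_card_nsmul _ _ _ hk

noncomputable def nearbyCells (c : ℤ × ℤ) : Finset (ℤ × ℤ) :=
  (Finset.Icc (c.1 - 2) (c.1 + 2) ×ˢ Finset.Icc (c.2 - 2) (c.2 + 2)).erase c

lemma card_nearbyCells (c : ℤ × ℤ) : (nearbyCells c).card = 24 := by
  rw [nearbyCells, Finset.card_erase_of_mem (by simp), Finset.card_product,
    Int.card_Icc, Int.card_Icc]
  ring_nf
  rfl

def CrossesAround {V : Type*} (f : V → ℤ × ℤ) (E : List (Sym2 V)) (c : ℤ × ℤ)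
    (d : (ℤ × ℤ) × (ℤ × ℤ)) : Prop :=
  if d.1 = d.2 then CrossesPair f E c d.1 else CrossesTriple f E d.1 c d.2

section CrossesAround

variable {V : Type*} {f : V → ℤ × ℤ} {E : List (Sym2 V)} {c d₁ d₂ : ℤ × ℤ}

lemma crossesAround_self : CrossesAround f E c (d₁, d₁) ↔ CrossesPair f E c d₁ := by
  simp [CrossesAround]

lemma crossesAround_of_ne (h : d₁ ≠ d₂) :
    CrossesAround f E c (d₁, d₂) ↔ CrossesTriple f E d₁ c d₂ := by
  simp [CrossesAround, h]

lemma ncard_crossesAround_le_two {ι : Type*} (E : ι → List (Sym2 V))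
    (hpair : ∀ c1 c2 : ℤ × ℤ, c1 ≠ c2 → {i | CrossesPair f (E i) c1 c2}.ncard ≤ 2)
    (htriple : ∀ c1 c2 c3 : ℤ × ℤ, c1 ≠ c2 → c1 ≠ c3 → c2 ≠ c3 →
      {i | CrossesTriple f (E i) c1 c2 c3}.ncard ≤ 2)
    {d : (ℤ × ℤ) × (ℤ × ℤ)} (hd : d ∈ nearbyCells c ×ˢ nearbyCells c) :
    {i | CrossesAround f (E i) c d}.ncard ≤ 2 := by
  obtain ⟨hd₁, hd₂⟩ := Finset.mem_product.mp hd
  have h₁ : d.1 ≠ c := Finset.ne_of_mem_erase hd₁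
  have h₂ : d.2 ≠ c := Finset.ne_of_mem_erase hd₂
  by_cases h : d.1 = d.2
  · simpa only [CrossesAround, if_pos h] using hpair c d.1 h₁.symm
  · simpa only [CrossesAround, if_neg h] using htriple d.1 c d.2 h₁ h h₂.symm

end CrossesAround

namespace IsRepresentation

variable {V : Type*} {G : SimpleGraph V} {f : V → ℤ × ℤ}

lemma isClique_fiber (hrep : IsRepresentation G f) (c : ℤ × ℤ) : G.IsClique {x | f x = c} :=
  fun u hu v hv huv => hrep.1 u v huv (hu.trans hv.symm)

lemma mem_nearbyCells (hrep : IsRepresentation G f) {u w : V} (h : G.Adj u w)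
    (hne : f w ≠ f u) : f w ∈ nearbyCells (f u) := by
  obtain ⟨h1, h2⟩ := hrep.2 u w h
  rw [abs_le] at h1 h2
  simp only [nearbyCells, Finset.mem_erase, Finset.mem_product, Finset.mem_Icc]
  exact ⟨hne, ⟨by omega, by omega⟩, by omega, by omega⟩

lemma exists_crossesAround {v x y : V} {W : G.Walk v v} (hrep : IsRepresentation G f)
    (hW : W.IsCycle) (h4 : 4 ≤ W.length) (hind : W.IsInduced) (hxy : s(x, y) ∈ W.edges)
    (hfy : f y ≠ f x) :
    ∃ d ∈ nearbyCells (f x) ×ˢ nearbyCells (f x), CrossesAround f W.edges (f x) d := by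
  have hy := hrep.mem_nearbyCells (W.adj_of_mem_edges hxy) hfy
  have hyx : s(y, x) ∈ W.edges := Sym2.eq_swap ▸ hxy
  obtain ⟨z, hzy, hxz⟩ := hW.exists_mem_edges_ne hxy
  by_cases hfzy : f z = f y
  · refine ⟨(f y, f y), Finset.mem_product.mpr ⟨hy, hy⟩, crossesAround_self.mpr ?_⟩
    exact Or.inl ⟨x, x, y, z, rfl, rfl, rfl, hfzy, hzy.symm, hxy, hxz⟩
  by_cases hfzx : f z = f x
  · obtain ⟨w, hwx, hzw⟩ := hW.exists_mem_edges_ne (Sym2.eq_swap ▸ hxz : s(z, x) ∈ W.edges)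
    have hfw : f w ≠ f x := by
      intro hfw
      rcases hW.eq_or_eq_or_eq_of_isClique h4 hind (hrep.isClique_fiber (f x))
        (W.fst_mem_support_of_mem_edges hxz) (W.fst_mem_support_of_mem_edges hzw)
        (W.snd_mem_support_of_mem_edges hzw) rfl hfzx hfw with h | h | h
      exacts [(W.adj_of_mem_edges hxz).ne h, hwx h.symm, (W.adj_of_mem_edges hzw).ne h]
    have hw := hrep.mem_nearbyCells (W.adj_of_mem_edges hzw) (hfzx ▸ hfw)
    rw [hfzx] at hw
    by_cases hfwy : f w = f y
    · refine ⟨(f y, f y), Finset.mem_product.mpr ⟨hy, hy⟩, crossesAround_self.mpr ?_⟩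
      exact Or.inr ⟨y, w, x, z, rfl, hfwy, rfl, hfzx, (W.adj_of_mem_edges hxz).ne, hyx,
        Sym2.eq_swap ▸ hzw⟩
    · refine ⟨(f y, f w), Finset.mem_product.mpr ⟨hy, hw⟩,
        (crossesAround_of_ne (Ne.symm hfwy)).mpr ?_⟩
      exact Or.inl ⟨y, x, z, w, rfl, rfl, hfzx, rfl, hyx, hzw⟩
  · have hz := hrep.mem_nearbyCells (W.adj_of_mem_edges hxz) hfzx
    refine ⟨(f y, f z), Finset.mem_product.mpr ⟨hy, hz⟩,
      (crossesAround_of_ne (Ne.symm hfzy)).mpr ?_⟩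
    exact Or.inl ⟨y, x, x, z, rfl, rfl, rfl, rfl, hyx, hxz⟩

end IsRepresentation

theorem simple_family_bounded_crossing_vertices_general {V : Type*}
    (G : SimpleGraph V) (f : V → ℤ × ℤ) (hrep : IsRepresentation G f)
    (m : ℕ) (c : Fin m → Σ v : V, G.Walk v v)
    (hcyc : ∀ i, (c i).2.IsCycle)
    (hlen : ∀ i, 4 ≤ (c i).2.length)
    (hind : ∀ i, ∀ x ∈ (c i).2.support, ∀ y ∈ (c i).2.support,
      G.Adj x y → s(x, y) ∈ (c i).2.edges)
    (hpair : ∀ c1 c2 : ℤ × ℤ, c1 ≠ c2 →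
      {i | CrossesPair f (c i).2.edges c1 c2}.ncard ≤ 2)
    (htriple : ∀ c1 c2 c3 : ℤ × ℤ, c1 ≠ c2 → c1 ≠ c3 → c2 ≠ c3 →
      {i | CrossesTriple f (c i).2.edges c1 c2 c3}.ncard ≤ 2) :
    ∀ cc : ℤ × ℤ,
      {x : V | f x = cc ∧ ∃ i, ∃ y : V,
        s(x, y) ∈ (c i).2.edges ∧ f y ≠ f x}.ncard ≤ 2304 := by
  classical
  intro cc
  let crossing : Finset (Fin m) :=
    {i | ∃ x y, f x = cc ∧ s(x, y) ∈ (c i).2.edges ∧ f y ≠ cc}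
  have hcrossing : crossing.card ≤ (24 * 24) * 2 := by
    rw [← Set.ncard_coe_finset, ← card_nearbyCells cc, ← Finset.card_product]
    refine Set.ncard_le_card_mul_of_subset_biUnion
      (s := fun d => {i | CrossesAround f (c i).2.edges cc d}) ?_ (fun _ _ => Set.toFinite _)
      (fun d hd => ncard_crossesAround_le_two (fun i => (c i).2.edges) hpair htriple hd)
    intro i hi
    obtain ⟨x, y, rfl, hxy, hfy⟩ := (Finset.mem_filter.mp hi).2
    obtain ⟨d, hd, hcross⟩ := hrep.exists_crossesAround (hcyc i) (hlen i) (hind i) hxy hfy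
    exact Set.mem_biUnion hd hcross
  calc _ ≤ crossing.card * 2 := by
        refine Set.ncard_le_card_mul_of_subset_biUnion
          (s := fun i => {x | x ∈ (c i).2.support} ∩ {x | f x = cc}) ?_
          (fun i _ => (c i).2.support.finite_toSet.subset Set.inter_subset_left)
          (fun i _ => (hcyc i).ncard_inter_le_two_of_isClique (hlen i) (hind i)
            (hrep.isClique_fiber cc))
        rintro x ⟨rfl, i, y, hxy, hfy⟩
        exact Set.mem_biUnion (Finset.mem_filter.mpr ⟨Finset.mem_univ i, x, y, rfl, hxy, hfy⟩)
          ⟨(c i).2.fst_mem_support_of_mem_edges hxy, rfl⟩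
    _ ≤ 2304 := by omega

/-- For a simple family of pairwise vertex-disjoint induced cycles (each pair of cells is
crossed by at most two cycles, and each triple of cells is crossed by at most two
cycles), every cell contains at most 2304 vertices incident to inter-cell edges of the
cycles. -/
theorem simple_family_bounded_crossing_vertices {V : Type*} [Fintype V]
    (G : SimpleGraph V) (f : V → ℤ × ℤ) (hrep : IsRepresentation G f)
    (m : ℕ) (c : Fin m → Σ v : V, G.Walk v v)
    (hcyc : ∀ i, (c i).2.IsCycle)
    (hlen : ∀ i, 4 ≤ (c i).2.length)
    (hind : ∀ i, ∀ x ∈ (c i).2.support, ∀ y ∈ (c i).2.support,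
      G.Adj x y → s(x, y) ∈ (c i).2.edges)
    (hdisj : ∀ i j, i ≠ j → ∀ x, x ∈ (c i).2.support → x ∉ (c j).2.support)
    (hpair : ∀ c1 c2 : ℤ × ℤ, c1 ≠ c2 →
      {i | CrossesPair f (c i).2.edges c1 c2}.ncard ≤ 2)
    (htriple : ∀ c1 c2 c3 : ℤ × ℤ, c1 ≠ c2 → c1 ≠ c3 → c2 ≠ c3 →
      {i | CrossesTriple f (c i).2.edges c1 c2 c3}.ncard ≤ 2) :
    ∀ cc : ℤ × ℤ,
      {x : V | f x = cc ∧ ∃ i, ∃ y : V,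
        s(x, y) ∈ (c i).2.edges ∧ f y ≠ f x}.ncard ≤ 2304 :=
  simple_family_bounded_crossing_vertices_general G f hrep m c hcyc hlen hind hpair htriple
end
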